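/- arXiv:2109.09728 — 2 statements merged into one kernel-verified Lean document; each statement's English description precedes it below -/
import Mathlib

section
/- Let α₁, α₂, α₃ ∈ ℝ with α₁α₂ + α₂α₃ + α₃α₁ ≤ 0, and let A = Circ(α₁, α₂, α₃) be the 3×3 circulant matrix with first row (α₁, α₂, α₃). Then the spectral norm of A equals √(α₁² + α₂² + α₃² − (α₁α₂ + α₂α₃ + α₃α₁)). -/
open scoped BigOperators ENNReal

/-- The `ℓ^p` norm of a vector in `ℝⁿ`, for `p ∈ [1, ∞]`. -/
noncomputable def vecPNorm {n : ℕ} (p : ℝ≥0∞) (x : Fin n → ℝ) : ℝ :=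
  if p = ∞ then ⨆ i, |x i| else (∑ i, |x i| ^ p.toReal) ^ (1 / p.toReal)

/-- The operator norm of a matrix acting on `(ℝⁿ, ‖·‖_p)`,
    i.e. `sup_{x ≠ 0} ‖Ax‖_p / ‖x‖_p`. -/
noncomputable def matPNorm {n : ℕ} (p : ℝ≥0∞) (A : Matrix (Fin n) (Fin n) ℝ) : ℝ :=
  sSup {r : ℝ | ∃ x : Fin n → ℝ, x ≠ 0 ∧ r = vecPNorm p (A.mulVec x) / vecPNorm p x}

/-- The circulant matrix `A(n, a, b)` with `a` on the diagonal and `b` elsewhere. -/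
def circA (n : ℕ) (a b : ℝ) : Matrix (Fin n) (Fin n) ℝ :=
  Matrix.of fun i j => if i = j then a else b

/-!
Write `A = Circ(α₁, α₂, α₃)`, `q = α₁² + α₂² + α₃²` and `p = α₁α₂ + α₂α₃ + α₃α₁`. Expanding gives
`‖Ax‖² = (q - p)‖x‖² + p (x₁ + x₂ + x₃)²`. When `p ≤ 0` the last term only decreases the norm,
so `‖Ax‖ ≤ √(q - p) ‖x‖`, with equality on the plane `x₁ + x₂ + x₃ = 0`, e.g. at `(1, -1, 0)`.
-/

open Matrix

lemma vecPNorm_two {n : ℕ} (x : Fin n → ℝ) : vecPNorm 2 x = Real.sqrt (∑ i, x i ^ 2) := by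
  rw [vecPNorm, if_neg ENNReal.ofNat_ne_top, ENNReal.toReal_ofNat, Real.sqrt_eq_rpow]
  congr 1
  refine Finset.sum_congr rfl fun i _ => ?_
  rw [Real.rpow_two, sq_abs]

lemma vecPNorm_two_eq_norm {n : ℕ} (x : Fin n → ℝ) : vecPNorm 2 x = ‖WithLp.toLp 2 x‖ := by
  simp [vecPNorm_two, EuclideanSpace.norm_eq]

lemma vecPNorm_two_pos {n : ℕ} {x : Fin n → ℝ} (hx : x ≠ 0) : 0 < vecPNorm 2 x := by
  rw [vecPNorm_two_eq_norm, norm_pos_iff]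
  exact fun h => hx (congrArg WithLp.ofLp h)

lemma matPNorm_two_eq_of_le_of_eq {n : ℕ} (A : Matrix (Fin n) (Fin n) ℝ) (c : ℝ)
    (hle : ∀ x, vecPNorm 2 (A *ᵥ x) ≤ c * vecPNorm 2 x)
    {x₀ : Fin n → ℝ} (hx₀ : x₀ ≠ 0) (heq : vecPNorm 2 (A *ᵥ x₀) = c * vecPNorm 2 x₀) :
    matPNorm 2 A = c := by
  refine IsGreatest.csSup_eq ⟨⟨x₀, hx₀, ?_⟩, ?_⟩
  · rw [heq, mul_div_cancel_right₀ _ (vecPNorm_two_pos hx₀).ne']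
  · rintro r ⟨x, hx, rfl⟩
    exact (div_le_iff₀ (vecPNorm_two_pos hx)).2 (hle x)

def circ3 {R : Type*} (a b c : R) : Matrix (Fin 3) (Fin 3) R :=
  !![a, b, c; c, a, b; b, c, a]

lemma sum_sq_circ3_mulVec {R : Type*} [CommRing R] (a b c : R) (x : Fin 3 → R) :
    ∑ i, (circ3 a b c *ᵥ x) i ^ 2 =
      (a ^ 2 + b ^ 2 + c ^ 2 - (a * b + b * c + c * a)) * ∑ i, x i ^ 2 +
        (a * b + b * c + c * a) * (∑ i, x i) ^ 2 := by
  simp only [mulVec, dotProduct, circ3, of_apply, cons_val', cons_val_fin_one, Fin.sum_univ_three,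
    cons_val_zero, cons_val_one, cons_val]
  ring

section

variable (a b c : ℝ)

lemma vecPNorm_two_circ3_mulVec_le (h : a * b + b * c + c * a ≤ 0) (x : Fin 3 → ℝ) :
    vecPNorm 2 (circ3 a b c *ᵥ x) ≤
      Real.sqrt (a ^ 2 + b ^ 2 + c ^ 2 - (a * b + b * c + c * a)) * vecPNorm 2 x := by
  rw [vecPNorm_two, vecPNorm_two, ← Real.sqrt_mul' _ (by positivity), sum_sq_circ3_mulVec]
  exact Real.sqrt_le_sqrt (add_le_of_nonpos_right (mul_nonpos_of_nonpos_of_nonneg h (sq_nonneg _)))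

lemma vecPNorm_two_circ3_mulVec_of_sum_eq_zero {x : Fin 3 → ℝ} (hx : ∑ i, x i = 0) :
    vecPNorm 2 (circ3 a b c *ᵥ x) =
      Real.sqrt (a ^ 2 + b ^ 2 + c ^ 2 - (a * b + b * c + c * a)) * vecPNorm 2 x := by
  rw [vecPNorm_two, vecPNorm_two, ← Real.sqrt_mul' _ (by positivity), sum_sq_circ3_mulVec, hx]
  ring_nf

end

theorem stmt_7 (α₁ α₂ α₃ : ℝ) (h : α₁ * α₂ + α₂ * α₃ + α₃ * α₁ ≤ 0) :
    matPNorm 2 !![α₁, α₂, α₃; α₃, α₁, α₂; α₂, α₃, α₁] =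
      Real.sqrt (α₁ ^ 2 + α₂ ^ 2 + α₃ ^ 2 - (α₁ * α₂ + α₂ * α₃ + α₃ * α₁)) := by
  have hx₀ : (![1, -1, 0] : Fin 3 → ℝ) ≠ 0 := fun h0 => by simpa using congrFun h0 0
  have hsum : ∑ i, (![1, -1, 0] : Fin 3 → ℝ) i = 0 := by simp [Fin.sum_univ_three]
  exact matPNorm_two_eq_of_le_of_eq (circ3 α₁ α₂ α₃) _
    (vecPNorm_two_circ3_mulVec_le α₁ α₂ α₃ h) hx₀
    (vecPNorm_two_circ3_mulVec_of_sum_eq_zero α₁ α₂ α₃ hsum)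
end

section
/- Let a, b ≥ 0, n ≥ 1, and let A = A(n,-a,b) be the matrix with -a on the diagonal and b elsewhere. For every p with 1 < p < ∞, the induced p-norm of A satisfies ‖A‖_p ≥ a + b. -/
open scoped BigOperators ENNReal

/-!
Every vector `x` with coordinate sum zero is an eigenvector of `A(n, -a, b)`: the off-diagonal
part contributes `b (∑ xⱼ - xᵢ) = -b xᵢ`, so `A x = -(a + b) x`. For `n ≥ 2` such a nonzero `x`
exists, and an eigenvalue is bounded in absolute value by any induced operator norm.
-/

open Matrix WithLp

section PNorm

variable {n : ℕ} {p : ℝ≥0∞}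

theorem vecPNorm_eq_norm_toLp (hp : p ≠ 0) (x : Fin n → ℝ) :
    vecPNorm p x = ‖toLp p x‖ := by
  by_cases htop : p = ∞
  · subst htop
    simp [vecPNorm, PiLp.norm_eq_ciSup]
  · have hp' : 0 < p.toReal := ENNReal.toReal_pos hp htop
    simp [vecPNorm, htop, PiLp.norm_eq_sum hp']

variable [Fact (1 ≤ p)]

theorem bddAbove_vecPNorm_ratio (A : Matrix (Fin n) (Fin n) ℝ) :
    BddAbove {r : ℝ | ∃ x : Fin n → ℝ, x ≠ 0 ∧ r = vecPNorm p (A *ᵥ x) / vecPNorm p x} := by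
  have hp : p ≠ 0 := (zero_lt_one.trans_le Fact.out).ne'
  let f := LinearMap.toContinuousLinearMap (toLpLin p p A)
  refine ⟨‖f‖, ?_⟩
  rintro r ⟨x, -, rfl⟩
  rw [vecPNorm_eq_norm_toLp hp, vecPNorm_eq_norm_toLp hp]
  exact div_le_of_le_mul₀ (norm_nonneg _) (norm_nonneg _) (f.le_opNorm (toLp p x))

theorem abs_le_matPNorm_of_mulVec_eq_smul {A : Matrix (Fin n) (Fin n) ℝ} {x : Fin n → ℝ}
    {c : ℝ} (hx : x ≠ 0) (hAx : A *ᵥ x = c • x) : |c| ≤ matPNorm p A := by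
  have hp : p ≠ 0 := (zero_lt_one.trans_le Fact.out).ne'
  refine le_csSup (bddAbove_vecPNorm_ratio A) ⟨x, hx, ?_⟩
  have hxn : ‖toLp p x‖ ≠ 0 := by simpa using hx
  rw [hAx, vecPNorm_eq_norm_toLp hp, vecPNorm_eq_norm_toLp hp, toLp_smul, norm_smul,
    Real.norm_eq_abs, mul_div_cancel_right₀ _ hxn]

end PNorm

theorem circA_mulVec_of_sum_eq_zero {n : ℕ} (c b : ℝ) {x : Fin n → ℝ} (hx : ∑ i, x i = 0) :
    circA n c b *ᵥ x = (c - b) • x := by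
  have hcirc : circA n c b = (c - b) • (1 : Matrix (Fin n) (Fin n) ℝ) + of fun _ _ => b := by
    ext i j
    by_cases h : i = j <;> simp [circA, h]
  have hconst : (of fun _ _ => b : Matrix (Fin n) (Fin n) ℝ) *ᵥ x = 0 := by
    ext i
    simp [mulVec, dotProduct, ← Finset.mul_sum, hx]
  rw [hcirc, add_mulVec, smul_mulVec, one_mulVec, hconst, add_zero]

theorem exists_ne_zero_sum_eq_zero {R : Type*} [AddCommGroup R] [One R] [NeZero (1 : R)]
    {n : ℕ} (hn : 2 ≤ n) : ∃ x : Fin n → R, x ≠ 0 ∧ ∑ i, x i = 0 := by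
  let i₀ : Fin n := ⟨0, by omega⟩
  let i₁ : Fin n := ⟨1, by omega⟩
  have hne : i₀ ≠ i₁ := by simp [i₀, i₁, Fin.ext_iff]
  refine ⟨Pi.single i₀ 1 - Pi.single i₁ 1, fun h => ?_, by simp [Finset.sum_sub_distrib]⟩
  simpa [hne] using congrFun h i₀

theorem stmt_12 (n : ℕ) (hn : 2 ≤ n) (a b : ℝ) (ha : 0 ≤ a) (hb : 0 ≤ b)
    (p : ℝ) (hp : 1 < p) :
    a + b ≤ matPNorm (ENNReal.ofReal p) (circA n (-a) b) := by
  have : Fact (1 ≤ ENNReal.ofReal p) := ⟨ENNReal.one_le_ofReal.mpr hp.le⟩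
  obtain ⟨x, hx, hsum⟩ := exists_ne_zero_sum_eq_zero (R := ℝ) hn
  have hc : |-a - b| = a + b := by rw [abs_of_nonpos (by linarith)]; ring
  rw [← hc]
  exact abs_le_matPNorm_of_mulVec_eq_smul hx (circA_mulVec_of_sum_eq_zero (-a) b hsum)
end
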